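/- arXiv:1809.02117 — 6 statements merged into one kernel-verified Lean document; each statement's English description precedes it below -/
import Mathlib

section
/- Let M be a left module over an associative ring R. If for every m ∈ M there exists r ∈ R with r·m = m (M is left s-unital), then for every finite list m₁,…,mₙ of elements of M there exists e ∈ R such that e·mᵢ = mᵢ for all i. -/
/-- If a left module `M` over a non-unital ring `R` is left s-unital, then for any
finite list of elements there is a common left unit. -/
theorem stmt1 {R M : Type*} [NonUnitalRing R] [AddCommGroup M]
    (l : R → M → M)
    (hl_add_r : ∀ r s : R, ∀ m : M, l (r + s) m = l r m + l s m)
    (hl_add_m : ∀ r : R, ∀ m n : M, l r (m + n) = l r m + l r n)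
    (hl_mul : ∀ r s : R, ∀ m : M, l (r * s) m = l r (l s m))
    (hsu : ∀ m : M, ∃ r : R, l r m = m) :
    ∀ L : List M, ∃ e : R, ∀ m ∈ L, l e m = m := by
  have hsub_m : ∀ r : R, ∀ m n : M, l r (m - n) = l r m - l r n := by
    intro r m n
    have h : n + (m - n) = m := by abel
    have : l r n + l r (m - n) = l r m := by rw [← hl_add_m, h]
    exact eq_sub_of_add_eq' this
  intro L
  induction L with
  | nil => exact ⟨0, by simp⟩
  | cons m L ih =>
    obtain ⟨e, he⟩ := ih
    obtain ⟨r, hr⟩ := hsu (m - l e m)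
    refine ⟨r + e - r * e, ?_⟩
    have key : ∀ x : M, l (r + e - r * e) x = l r x + l e x - l r (l e x) := by
      intro x
      have h0 : (r + e - r * e) + r * e = r + e := by abel
      have h1 : l (r + e - r * e) x + l (r * e) x = l (r + e) x := by
        rw [← hl_add_r, h0]
      rw [hl_add_r, hl_mul] at h1
      exact eq_sub_of_add_eq h1
    intro n hn
    rw [List.mem_cons] at hn
    rcases hn with rfl | hn
    · have h4 : l r n - l r (l e n) = n - l e n := by rw [← hsub_m]; exact hr
      calc l (r + e - r * e) n = l r n + l e n - l r (l e n) := key n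
        _ = (l r n - l r (l e n)) + l e n := by abel
        _ = (n - l e n) + l e n := by rw [h4]
        _ = n := by abel
    · have hne := he n hn
      rw [key n, hne]; abel
end

section
/- Let M be a right module over an associative ring R. If for every m ∈ M there exists r ∈ R with m·r = m, then for every finite list m₁,…,mₙ of elements of M there exists e ∈ R such that mᵢ·e = mᵢ for all i. -/
/-! If `e` is a right unit for `m₁, …, mₙ` and `r` is a right unit for `m - m e`, then
`e + r - e r` is a right unit for `m₁, …, mₙ, m`: for each `mᵢ` the terms `mᵢ r` and `mᵢ e r`
cancel, and `m (e + r - e r) = m e + (m - m e) r = m`. Induction on the list. -/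

section RightUnit

variable {R M : Type*} [NonUnitalRing R] [AddCommGroup M] (B : M →+ R →+ M)
  (hB : ∀ m r s, B m (r * s) = B (B m r) s)
include hB

theorem apply_add_sub_mul_of_apply_eq {m : M} {e : R} (he : B m e = m) (r : R) :
    B m (e + r - e * r) = m := by
  rw [map_sub, map_add, hB, he, add_sub_cancel_right]

theorem apply_add_sub_mul_of_apply_sub_eq {m : M} {e r : R}
    (hr : B (m - B m e) r = m - B m e) : B m (e + r - e * r) = m := by
  rw [map_sub, AddMonoidHom.sub_apply] at hr
  rw [map_sub, map_add, hB, add_sub_assoc, hr, add_sub_cancel]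

theorem exists_forall_mem_apply_eq (hsu : ∀ m, ∃ r, B m r = m) (L : List M) :
    ∃ e, ∀ m ∈ L, B m e = m := by
  induction L with
  | nil => exact ⟨0, by simp⟩
  | cons m L ih =>
    obtain ⟨e, he⟩ := ih
    obtain ⟨r, hr⟩ := hsu (m - B m e)
    refine ⟨e + r - e * r, ?_⟩
    rintro n (_ | ⟨_, hn⟩)
    · exact apply_add_sub_mul_of_apply_sub_eq B hB hr
    · exact apply_add_sub_mul_of_apply_eq B hB (he n hn) r

end RightUnit

/-- If a right module `M` over a non-unital ring `R` is right s-unital, then for any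
finite list of elements there is a common right unit. -/
theorem stmt2 {R M : Type*} [NonUnitalRing R] [AddCommGroup M]
    (ρ : M → R → M)
    (hρ_add_r : ∀ m : M, ∀ r s : R, ρ m (r + s) = ρ m r + ρ m s)
    (hρ_add_m : ∀ m n : M, ∀ r : R, ρ (m + n) r = ρ m r + ρ n r)
    (hρ_mul : ∀ m : M, ∀ r s : R, ρ m (r * s) = ρ (ρ m r) s)
    (hsu : ∀ m : M, ∃ r : R, ρ m r = m) :
    ∀ L : List M, ∃ e : R, ∀ m ∈ L, ρ m e = m :=
  let B : M →+ R →+ M := AddMonoidHom.mk' (fun m => AddMonoidHom.mk' (ρ m) (hρ_add_r m))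
    fun m n => AddMonoidHom.ext (hρ_add_m m n)
  exists_forall_mem_apply_eq B hρ_mul hsu
end

section
/- Let M be an R-bimodule over an associative ring R. If M is s-unital (for every m ∈ M there exist r, s ∈ R with r·m = m and m·s = m), then for every finite list m₁,…,mₙ ∈ M there exists a single element e ∈ R with e·mᵢ = mᵢ·e = mᵢ for all i. -/
/-!
Formally `x - (u + r - r u) x = (1 - r)(1 - u) x`. Hence if `u` fixes `x` then so does
`u + r - r u` for every `r`, and if `r` fixes `x - u x` then `u + r - r u` fixes `x`.
Induction along the list gives a common left unit `u` and, through `Rᵐᵒᵖ`, a common right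
unit `v`; then `u + v - v u` is a two-sided unit for the whole list.
-/

open MulOpposite

structure IsNonUnitalLeftAction {R M : Type*} [NonUnitalRing R] [AddCommGroup M]
    (l : R → M → M) : Prop where
  add_left : ∀ r s : R, ∀ m : M, l (r + s) m = l r m + l s m
  add_right : ∀ r : R, ∀ m n : M, l r (m + n) = l r m + l r n
  mul : ∀ r s : R, ∀ m : M, l (r * s) m = l r (l s m)

namespace IsNonUnitalLeftAction

variable {R M : Type*} [NonUnitalRing R] [AddCommGroup M] {l : R → M → M}

theorem sub_left (hl : IsNonUnitalLeftAction l) (r s : R) (m : M) :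
    l (r - s) m = l r m - l s m :=
  map_sub (AddMonoidHom.mk' (l · m) (hl.add_left · · m)) r s

theorem sub_right (hl : IsNonUnitalLeftAction l) (r : R) (m n : M) :
    l r (m - n) = l r m - l r n :=
  map_sub (AddMonoidHom.mk' (l r) (hl.add_right r)) m n

theorem apply_circ_of_apply_eq (hl : IsNonUnitalLeftAction l) {u : R} {x : M}
    (hu : l u x = x) (r : R) : l (u + r - r * u) x = x := by
  rw [hl.sub_left, hl.add_left, hl.mul, hu]
  abel

theorem apply_circ_of_apply_sub_eq (hl : IsNonUnitalLeftAction l) {u r : R} {x : M}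
    (hr : l r (x - l u x) = x - l u x) : l (u + r - r * u) x = x := by
  rw [hl.sub_right] at hr
  rw [hl.sub_left, hl.add_left, hl.mul, add_sub_assoc, hr]
  abel

theorem exists_common_unit (hl : IsNonUnitalLeftAction l) (hsu : ∀ m : M, ∃ r : R, l r m = m)
    (L : List M) : ∃ u : R, ∀ m ∈ L, l u m = m := by
  induction L with
  | nil => exact ⟨0, by simp⟩
  | cons a L ih =>
    obtain ⟨u, hu⟩ := ih
    obtain ⟨r, hr⟩ := hsu (a - l u a)
    refine ⟨u + r - r * u, fun m hm => ?_⟩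
    rcases List.mem_cons.mp hm with rfl | hmL
    · exact hl.apply_circ_of_apply_sub_eq hr
    · exact hl.apply_circ_of_apply_eq (hu m hmL) r

theorem of_right_action {ρ : M → R → M}
    (hρ_add_r : ∀ m : M, ∀ r s : R, ρ m (r + s) = ρ m r + ρ m s)
    (hρ_add_m : ∀ m n : M, ∀ r : R, ρ (m + n) r = ρ m r + ρ n r)
    (hρ_mul : ∀ m : M, ∀ r s : R, ρ m (r * s) = ρ (ρ m r) s) :
    IsNonUnitalLeftAction (fun (r : Rᵐᵒᵖ) m => ρ m r.unop) where
  add_left r s m := hρ_add_r m r.unop s.unop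
  add_right r m n := hρ_add_m m n r.unop
  mul r s m := hρ_mul m s.unop r.unop

end IsNonUnitalLeftAction

theorem stmt3_general {R M : Type*} [NonUnitalRing R] [AddCommGroup M]
    (l : R → M → M) (ρ : M → R → M)
    (hl_add_r : ∀ r s : R, ∀ m : M, l (r + s) m = l r m + l s m)
    (hl_add_m : ∀ r : R, ∀ m n : M, l r (m + n) = l r m + l r n)
    (hl_mul : ∀ r s : R, ∀ m : M, l (r * s) m = l r (l s m))
    (hρ_add_r : ∀ m : M, ∀ r s : R, ρ m (r + s) = ρ m r + ρ m s)
    (hρ_add_m : ∀ m n : M, ∀ r : R, ρ (m + n) r = ρ m r + ρ n r)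
    (hρ_mul : ∀ m : M, ∀ r s : R, ρ m (r * s) = ρ (ρ m r) s)
    (hsu : ∀ m : M, ∃ r s : R, l r m = m ∧ ρ m s = m) :
    ∀ L : List M, ∃ e : R, ∀ m ∈ L, l e m = m ∧ ρ m e = m := by
  have hl : IsNonUnitalLeftAction l := ⟨hl_add_r, hl_add_m, hl_mul⟩
  have hρ := IsNonUnitalLeftAction.of_right_action hρ_add_r hρ_add_m hρ_mul
  intro L
  obtain ⟨u, hu⟩ := hl.exists_common_unit (fun m => (hsu m).imp fun _ ⟨_, h, _⟩ => h) L
  obtain ⟨v, hv⟩ := hρ.exists_common_unit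
    (fun m => (hsu m).elim fun _ ⟨s, _, h⟩ => ⟨op s, h⟩) L
  refine ⟨u + v.unop - v.unop * u, fun m hm => ⟨hl.apply_circ_of_apply_eq (hu m hm) _, ?_⟩⟩
  simpa [add_comm] using hρ.apply_circ_of_apply_eq (hv m hm) (op u)

/-- If an `R`-bimodule `M` over a non-unital ring `R` is s-unital, then for any
finite list of elements there is a single common two-sided unit. -/
theorem stmt3 {R M : Type*} [NonUnitalRing R] [AddCommGroup M]
    (l : R → M → M) (ρ : M → R → M)
    (hl_add_r : ∀ r s : R, ∀ m : M, l (r + s) m = l r m + l s m)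
    (hl_add_m : ∀ r : R, ∀ m n : M, l r (m + n) = l r m + l r n)
    (hl_mul : ∀ r s : R, ∀ m : M, l (r * s) m = l r (l s m))
    (hρ_add_r : ∀ m : M, ∀ r s : R, ρ m (r + s) = ρ m r + ρ m s)
    (hρ_add_m : ∀ m n : M, ∀ r : R, ρ (m + n) r = ρ m r + ρ n r)
    (hρ_mul : ∀ m : M, ∀ r s : R, ρ m (r * s) = ρ (ρ m r) s)
    (hcomp : ∀ r : R, ∀ m : M, ∀ s : R, ρ (l r m) s = l r (ρ m s))
    (hsu : ∀ m : M, ∃ r s : R, l r m = m ∧ ρ m s = m) :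
    ∀ L : List M, ∃ e : R, ∀ m ∈ L, l e m = m ∧ ρ m e = m :=
  stmt3_general l ρ hl_add_r hl_add_m hl_mul hρ_add_r hρ_add_m hρ_mul hsu
end

section
/- An associative ring R is s-unital (every element r satisfies r ∈ Rr and r ∈ rR) if and only if for every finite list r₁,…,rₙ ∈ R there exists e ∈ R with e·rᵢ = rᵢ·e = rᵢ for all i. -/
/-- A non-unital ring `R` is s-unital iff every finite list of elements admits a
common two-sided unit. -/
theorem stmt4 {R : Type*} [NonUnitalRing R] :
    (∀ r : R, (∃ s : R, s * r = r) ∧ (∃ t : R, r * t = r)) ↔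
      (∀ L : List R, ∃ e : R, ∀ r ∈ L, e * r = r ∧ r * e = r) := by
  constructor
  · intro h L
    -- common left unit
    have hleft : ∀ L : List R, ∃ u : R, ∀ r ∈ L, u * r = r := by
      intro L
      induction L with
      | nil => exact ⟨0, by simp⟩
      | cons a L ih =>
        obtain ⟨u, hu⟩ := ih
        obtain ⟨s, hs⟩ := (h (a - u * a)).1
        refine ⟨u + s - s * u, ?_⟩
        intro r hr
        rcases List.mem_cons.mp hr with rfl | hr
        · rw [mul_sub] at hs
          rw [sub_mul, add_mul, mul_assoc, add_sub_assoc, hs]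
          abel
        · rw [sub_mul, add_mul, mul_assoc, hu r hr]
          abel
    have hright : ∀ L : List R, ∃ v : R, ∀ r ∈ L, r * v = r := by
      intro L
      induction L with
      | nil => exact ⟨0, by simp⟩
      | cons a L ih =>
        obtain ⟨v, hv⟩ := ih
        obtain ⟨t, ht⟩ := (h (a - a * v)).2
        refine ⟨v + t - v * t, ?_⟩
        intro r hr
        rcases List.mem_cons.mp hr with rfl | hr
        · rw [sub_mul] at ht
          rw [mul_sub, mul_add, ← mul_assoc, add_sub_assoc, ht]
          abel
        · rw [mul_sub, mul_add, ← mul_assoc, hv r hr]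
          abel
    obtain ⟨u, hu⟩ := hleft L
    obtain ⟨v, hv⟩ := hright L
    refine ⟨u + v - v * u, fun r hr => ⟨?_, ?_⟩⟩
    · rw [sub_mul, add_mul, mul_assoc, hu r hr]; abel
    · rw [mul_sub, mul_add, ← mul_assoc, hv r hr]; abel
  · intro h r
    obtain ⟨e, he⟩ := h [r]
    obtain ⟨h1, h2⟩ := he r (by simp)
    exact ⟨⟨e, h1⟩, ⟨e, h2⟩⟩
end

section
/- An associative ring R is locally unital in the two-sided sense if and only if it is both left and right locally unital. Precisely: if for every finite list of elements of R there is an idempotent acting as a left identity on them, and likewise an idempotent acting as a right identity on them, then for every finite list r₁,…,rₙ ∈ R there is a single idempotent e ∈ R with e·rᵢ = rᵢ·e = rᵢ for all i. -/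
/-!
Given a left local unit `b` for `r₁, …, rₙ` and a right local unit `a` for `b, r₁, …, rₙ`,
take `e = a + b - a * b`. In the unitization `1 - e = (1 - a) * (1 - b)`, so `e * rᵢ = rᵢ`
because `(1 - b) * rᵢ = 0`, and `rᵢ * e = rᵢ` because `rᵢ * (1 - a) = 0`; and `e` is idempotent
because `b * a = b` gives `(1 - b) * (1 - a) = 1 - a`.
-/

section
variable {R : Type*} [NonUnitalRing R] {a b : R}

theorem IsIdempotentElem.add_sub_mul_of_mul_eq (ha : IsIdempotentElem a)
    (hb : IsIdempotentElem b) (hba : b * a = b) : IsIdempotentElem (a + b - a * b) := by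
  have hba' (x : R) : b * (a * x) = b * x := by rw [← mul_assoc, hba]
  have ha' (x : R) : a * (a * x) = a * x := by rw [← mul_assoc, ha.eq]
  unfold IsIdempotentElem
  simp only [mul_add, add_mul, mul_sub, sub_mul, mul_assoc, ha.eq, hb.eq, hba, hba', ha']
  abel

theorem add_sub_mul_mul_eq_of_mul_eq {r : R} (hr : b * r = r) : (a + b - a * b) * r = r := by
  rw [sub_mul, add_mul, mul_assoc, hr]
  abel

theorem mul_add_sub_mul_eq_of_mul_eq {r : R} (hr : r * a = r) : r * (a + b - a * b) = r := by
  rw [mul_sub, mul_add, ← mul_assoc, hr]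
  abel

end

/-- A non-unital ring is locally unital (two-sided sense) iff it is both left and
right locally unital. -/
theorem stmt11 {R : Type*} [NonUnitalRing R] :
    ((∀ L : List R, ∃ e : R, e * e = e ∧ ∀ r ∈ L, e * r = r) ∧
      (∀ L : List R, ∃ e : R, e * e = e ∧ ∀ r ∈ L, r * e = r)) ↔
      (∀ L : List R, ∃ e : R, e * e = e ∧ ∀ r ∈ L, e * r = r ∧ r * e = r) := by
  constructor
  · rintro ⟨hleft, hright⟩ L
    obtain ⟨b, hb, hbL⟩ := hleft L
    obtain ⟨a, ha, haL⟩ := hright (b :: L)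
    refine ⟨a + b - a * b, IsIdempotentElem.add_sub_mul_of_mul_eq ha hb (haL b List.mem_cons_self),
      fun r hr => ⟨add_sub_mul_mul_eq_of_mul_eq (hbL r hr), ?_⟩⟩
    exact mul_add_sub_mul_eq_of_mul_eq (haL r (List.mem_cons_of_mem b hr))
  · intro h
    exact ⟨fun L => (h L).imp fun _ ⟨he, hL⟩ => ⟨he, fun r hr => (hL r hr).1⟩,
      fun L => (h L).imp fun _ ⟨he, hL⟩ => ⟨he, fun r hr => (hL r hr).2⟩⟩
end

section
/- Every regular ring is left locally unital: if R is an associative ring such that for every r ∈ R there exists s ∈ R with r = r·s·r, then for every finite list r₁,…,rₙ ∈ R there exists an idempotent e ∈ R with e·rᵢ = rᵢ for all i. -/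
/-!
Induct on the list. Given an idempotent `e` that is a left unit for the elements so far and a new
element `a`, the defect `a' := a - e * a` satisfies `e * a' = 0`. Regularity `a' = a' * s * a'`
makes `g := a' * s` an idempotent with `g * a' = a'` and `e * g = 0`. Then `g - g * e` is an
idempotent orthogonal to `e` on both sides, so `e' := e + (g - g * e)` is idempotent, it still fixes
everything `e` fixes, and `e' * a = e * a + g * a' = a`.
-/

namespace IsIdempotentElem

variable {R : Type*} [NonUnitalRing R] {e g : R}

theorem sub_mul_of_mul_eq_zero (hg : IsIdempotentElem g) (heg : e * g = 0) :
    IsIdempotentElem (g - g * e) := by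
  have hgeg : g * e * g = 0 := by rw [mul_assoc, heg, mul_zero]
  simp only [IsIdempotentElem, mul_sub, sub_mul, hg.eq, hgeg, ← mul_assoc, sub_zero]

theorem add_sub_mul_of_mul_eq_zero (he : IsIdempotentElem e) (hg : IsIdempotentElem g)
    (heg : e * g = 0) : IsIdempotentElem (e + (g - g * e)) := by
  refine he.add (hg.sub_mul_of_mul_eq_zero heg) ?_
  rw [mul_sub, ← mul_assoc, heg, zero_mul, sub_mul, mul_assoc, he.eq, sub_self, sub_self,
    add_zero]

end IsIdempotentElem

section Regular

variable {R : Type*} [NonUnitalRing R]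

theorem isIdempotentElem_mul_of_eq_mul_mul {a s : R} (h : a = a * s * a) :
    IsIdempotentElem (a * s) := by
  rw [IsIdempotentElem, ← mul_assoc, ← h]

theorem IsIdempotentElem.exists_extension_mul_eq_self_of_regular
    (hreg : ∀ r : R, ∃ s : R, r = r * s * r) {e : R} (he : IsIdempotentElem e) (a : R) :
    ∃ e' : R, IsIdempotentElem e' ∧ e' * a = a ∧ ∀ x, e * x = x → e' * x = x := by
  set a' := a - e * a
  have hea' : e * a' = 0 := by rw [mul_sub, ← mul_assoc, he.eq, sub_self]
  obtain ⟨s, hs⟩ := hreg a'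
  have heg : e * (a' * s) = 0 := by rw [← mul_assoc, hea', zero_mul]
  have hmul (x : R) : (e + (a' * s - a' * s * e)) * x = e * x + a' * s * (x - e * x) := by
    noncomm_ring
  refine ⟨_, he.add_sub_mul_of_mul_eq_zero (isIdempotentElem_mul_of_eq_mul_mul hs) heg, ?_, ?_⟩
  · rw [hmul, ← hs, add_sub_cancel]
  · intro x hx
    rw [hmul, hx, sub_self, mul_zero, add_zero]

end Regular

/-- Every regular ring is left locally unital. -/
theorem stmt12 {R : Type*} [NonUnitalRing R]
    (hreg : ∀ r : R, ∃ s : R, r = r * s * r) :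
    ∀ L : List R, ∃ e : R, e * e = e ∧ ∀ r ∈ L, e * r = r := by
  intro L
  induction L with
  | nil => exact ⟨0, mul_zero 0, by simp⟩
  | cons a L ih =>
    obtain ⟨e, he, hL⟩ := ih
    obtain ⟨e', he', hea, hfix⟩ :=
      IsIdempotentElem.exists_extension_mul_eq_self_of_regular hreg he a
    refine ⟨e', he', ?_⟩
    simpa [hea] using fun r hr ↦ hfix r (hL r hr)
end
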